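/- arXiv:2008.00405 — 7 statements merged into one kernel-verified Lean document; each statement's English description precedes it below -/
import Mathlib

section
/- Let A be a Noetherian local ring, let φ₁,…,φ_r (r ≥ 1) be a regular sequence in A, and let N₁ and N₂ be saturated subsets of ℕ^r. Then 𝒤(N₁ ∩ N₂) = 𝒤(N₁) ∩ 𝒤(N₂), where 𝒤(N) denotes the ideal of A generated by {φ₁^{b₁}⋯φ_r^{b_r} : b ∈ N}. -/
/-- A subset `N` of `ℕ^ι` is *saturated* if it is nonempty and
`a + ℕ^ι ⊆ N` for every `a ∈ N`. -/
def Saturated {ι : Type*} (N : Set (ι → ℕ)) : Prop :=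
  N.Nonempty ∧ ∀ a ∈ N, ∀ c : ι → ℕ, a + c ∈ N

/-- `𝒤(N)`: the ideal of `A` generated by the monomials
`φ₁^{b₁} ⋯ φ_r^{b_r}` for `b ∈ N`. -/
def monIdeal {A : Type*} [CommRing A] {ι : Type*} [Fintype ι]
    (φ : ι → A) (N : Set (ι → ℕ)) : Ideal A :=
  Ideal.span {x : A | ∃ b ∈ N, x = ∏ i, φ i ^ b i}


/-!
Write `φ ^ a` for `∏ i, φ i ^ a i` and `𝒤(N)` for the ideal generated by the `φ ^ a`, `a ∈ N`;
the preimage `(· + a) ⁻¹' M` plays the role of `M - a`.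

Regular sequences in a Noetherian local ring can be permuted, so each `φ i` is a nonzerodivisor
modulo the ideal generated by any set of the other `φ j`. Splitting
`𝒤(N) = 𝒤(N ∩ {a | a j = 0}) + φ j · 𝒤(N - e_j)` and inducting on a bound for the exponents,
`φ i` stays a nonzerodivisor modulo `𝒤(N)` as long as no exponent in `N` involves `i`. For an upper
set `M` this gives the colon formula `𝒤(M) : φ ^ a = 𝒤(M - a)`, that is
`𝒤(M) ∩ (φ ^ a) = 𝒤(M ∩ (a + ℕ^r))`, and the intersection formula follows by induction on a finite
set of generators of `𝒤(N₁)`.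
-/

open Ideal

lemma Saturated.isUpperSet {ι : Type*} {N : Set (ι → ℕ)} (hN : Saturated N) : IsUpperSet N :=
  fun a b hab ha => add_tsub_cancel_of_le hab ▸ hN.2 a ha (b - a)

section MonomialIdeal

variable {A : Type*} [CommRing A] {ι : Type*} [Fintype ι]

def monomial (φ : ι → A) (a : ι → ℕ) : A := ∏ i, φ i ^ a i

section Monomial

variable (φ : ι → A)

@[simp] lemma monomial_zero : monomial φ 0 = 1 := by simp [monomial]

lemma monomial_add (a b : ι → ℕ) : monomial φ (a + b) = monomial φ a * monomial φ b := by
  simp [monomial, pow_add, Finset.prod_mul_distrib]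

@[simp] lemma monomial_single [DecidableEq ι] (i : ι) (m : ℕ) :
    monomial φ (Pi.single i m) = φ i ^ m := by
  rw [monomial, Finset.prod_eq_single i (fun l _ hl => by simp [hl]) (by simp)]
  simp

lemma monIdeal_eq_span_image (N : Set (ι → ℕ)) : monIdeal φ N = span (monomial φ '' N) := by
  rw [monIdeal]
  congr 1
  ext
  simp [monomial, eq_comm]

lemma monIdeal_le_iff {N : Set (ι → ℕ)} {I : Ideal A} :
    monIdeal φ N ≤ I ↔ ∀ a ∈ N, monomial φ a ∈ I := by
  rw [monIdeal_eq_span_image, span_le, Set.image_subset_iff]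
  rfl

lemma monomial_mem_monIdeal {N : Set (ι → ℕ)} {a : ι → ℕ} (ha : a ∈ N) :
    monomial φ a ∈ monIdeal φ N :=
  (monIdeal_le_iff φ).1 le_rfl a ha

lemma monomial_mem_monIdeal_of_le {N : Set (ι → ℕ)} {a b : ι → ℕ} (ha : a ∈ N) (hab : a ≤ b) :
    monomial φ b ∈ monIdeal φ N := by
  rw [← add_tsub_cancel_of_le hab, monomial_add]
  exact mul_mem_right _ _ (monomial_mem_monIdeal φ ha)

lemma monIdeal_mono {N N' : Set (ι → ℕ)} (h : N ⊆ N') : monIdeal φ N ≤ monIdeal φ N' :=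
  (monIdeal_le_iff φ).2 fun _ ha => monomial_mem_monIdeal φ (h ha)

@[simp] lemma monIdeal_empty : monIdeal φ ∅ = ⊥ := by
  simp [monIdeal_eq_span_image]

lemma monIdeal_union (N N' : Set (ι → ℕ)) :
    monIdeal φ (N ∪ N') = monIdeal φ N ⊔ monIdeal φ N' := by
  simp only [monIdeal_eq_span_image, Set.image_union, span_union]

lemma monIdeal_insert (a : ι → ℕ) (N : Set (ι → ℕ)) :
    monIdeal φ (insert a N) = span {monomial φ a} ⊔ monIdeal φ N := by
  simp only [monIdeal_eq_span_image, Set.image_insert_eq, span_insert]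

lemma monIdeal_upperClosure (N : Set (ι → ℕ)) : monIdeal φ (upperClosure N) = monIdeal φ N :=
  le_antisymm
    ((monIdeal_le_iff φ).2 fun _ ⟨_, ha, hab⟩ => monomial_mem_monIdeal_of_le φ ha hab)
    (monIdeal_mono φ subset_upperClosure)

lemma exists_finset_of_mem_monIdeal {N : Set (ι → ℕ)} {x : A} (hx : x ∈ monIdeal φ N) :
    ∃ F : Finset (ι → ℕ), ↑F ⊆ N ∧ x ∈ monIdeal φ F := by
  classical
  rw [monIdeal_eq_span_image] at hx
  obtain ⟨T, hT, hxT⟩ := Submodule.mem_span_finite_of_mem_span hx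
  obtain ⟨F, hF, rfl⟩ := Finset.subset_set_image_iff.1 hT
  exact ⟨F, hF, by rwa [monIdeal_eq_span_image, ← Finset.coe_image]⟩

lemma monIdeal_preimage_add_le_colon (M : Set (ι → ℕ)) (a : ι → ℕ) :
    monIdeal φ ((· + a) ⁻¹' M) ≤ (monIdeal φ (M ∩ Set.Ici a)).colon {monomial φ a} :=
  (monIdeal_le_iff φ).2 fun b hb => Submodule.mem_colon_singleton.2 <| by
    rw [smul_eq_mul, ← monomial_add]
    exact monomial_mem_monIdeal φ ⟨hb, Set.mem_Ici.2 le_add_self⟩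

lemma monIdeal_eq_sup_span_singleton_mul [DecidableEq ι] (N : Set (ι → ℕ)) (j : ι) :
    monIdeal φ N = monIdeal φ {a ∈ N | a j = 0} ⊔
      span {φ j} * monIdeal φ ((· + Pi.single j 1) ⁻¹' N) := by
  refine le_antisymm ((monIdeal_le_iff φ).2 fun a ha => ?_)
    (sup_le (monIdeal_mono φ (Set.sep_subset _ _)) (span_singleton_mul_le_iff.2 fun z hz => ?_))
  · by_cases haj : a j = 0
    · exact Submodule.mem_sup_left (monomial_mem_monIdeal φ ⟨ha, haj⟩)
    · have hle : Pi.single j 1 ≤ a := by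
        intro l
        rcases eq_or_ne l j with rfl | hl
        · simpa using Nat.one_le_iff_ne_zero.2 haj
        · simp [hl]
      refine Submodule.mem_sup_right (mem_span_singleton_mul.2
        ⟨monomial φ (a - Pi.single j 1), monomial_mem_monIdeal φ ?_, ?_⟩)
      · simpa [Set.mem_preimage, tsub_add_cancel_of_le hle] using ha
      · rw [← pow_one (φ j), ← monomial_single, ← monomial_add, add_tsub_cancel_of_le hle]
  · have hz' := monIdeal_preimage_add_le_colon φ N (Pi.single j 1) hz
    rw [Submodule.mem_colon_singleton, smul_eq_mul, monomial_single, pow_one, mul_comm] at hz'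
    exact monIdeal_mono φ Set.inter_subset_left hz'

end Monomial

theorem isSMulRegular_quotient_sup_span_singleton_mul {J₀ J : Ideal A} {s t : A}
    (hs₀ : IsSMulRegular (A ⧸ (J₀ ⊔ span {t})) s) (ht : IsSMulRegular (A ⧸ J₀) t)
    (hs : IsSMulRegular (A ⧸ (J₀ ⊔ J)) s) : IsSMulRegular (A ⧸ (J₀ ⊔ span {t} * J)) s := by
  simp only [isSMulRegular_quotient_iff_mem_of_smul_mem, smul_eq_mul] at hs₀ ht hs ⊢
  intro y hy
  obtain ⟨u, hu, _, hv, rfl⟩ := Submodule.mem_sup.1 (hs₀ y (sup_le_sup_left mul_le_left J₀ hy))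
  obtain ⟨y', rfl⟩ := mem_span_singleton'.1 hv
  obtain ⟨g, hg, _, hw, hgw⟩ := Submodule.mem_sup.1 hy
  obtain ⟨h, hh, rfl⟩ := mem_span_singleton_mul.1 hw
  have h₁ : s * y' - h ∈ J₀ := ht _ <| by
    rw [show t * (s * y' - h) = g - s * u by linear_combination -hgw]
    exact sub_mem hg (mul_mem_left _ _ hu)
  obtain ⟨p, hp, q, hq, rfl⟩ := Submodule.mem_sup.1 <|
    hs y' (by simpa using add_mem (Submodule.mem_sup_left h₁) (Submodule.mem_sup_right hh))
  rw [add_mul, ← add_assoc]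
  exact add_mem (Submodule.mem_sup_left (add_mem hu (mul_mem_right _ _ hp)))
    (Submodule.mem_sup_right (mul_comm q t ▸ mul_mem_mul (mem_span_singleton_self t) hq))

def IsRegularModOthers (φ : ι → A) : Prop :=
  ∀ (U : Finset ι) (i : ι), i ∉ U → IsSMulRegular (A ⧸ span (φ '' U)) (φ i)

section Regular

variable {φ : ι → A}

lemma isSMulRegular_monIdeal_sup_span_of_subset_zero (hφ : IsRegularModOthers φ) {U : Finset ι}
    {i : ι} {N : Set (ι → ℕ)} (hiU : i ∉ U) (hN : N ⊆ {0}) :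
    IsSMulRegular (A ⧸ (monIdeal φ N ⊔ span (φ '' U))) (φ i) := by
  rcases Set.subset_singleton_iff_eq.1 hN with rfl | rfl
  · rw [monIdeal_empty, bot_sup_eq]
    exact hφ U i hiU
  · have h₀ : monIdeal φ {0} = ⊤ := (eq_top_iff_one _).2 <| by
      simpa using monomial_mem_monIdeal φ (Set.mem_singleton (0 : ι → ℕ))
    rw [h₀, top_sup_eq]
    exact (isSMulRegular_quotient_iff_mem_of_smul_mem _ _).2 fun _ _ => Submodule.mem_top

variable [DecidableEq ι]

lemma isSMulRegular_monIdeal_sup_span_of_filter {N : Set (ι → ℕ)} {U : Finset ι} {i j : ι}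
    (hi : IsSMulRegular (A ⧸ (monIdeal φ {a ∈ N | a j = 0} ⊔ span (φ '' ↑(insert j U)))) (φ i))
    (hj : IsSMulRegular (A ⧸ (monIdeal φ {a ∈ N | a j = 0} ⊔ span (φ '' U))) (φ j))
    (hi' : IsSMulRegular (A ⧸ (monIdeal φ ({a ∈ N | a j = 0} ∪ (· + Pi.single j 1) ⁻¹' N) ⊔
      span (φ '' U))) (φ i)) :
    IsSMulRegular (A ⧸ (monIdeal φ N ⊔ span (φ '' U))) (φ i) := by
  rw [Finset.coe_insert, Set.image_insert_eq, span_insert, sup_comm (span {φ j}), ← sup_assoc] at hi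
  rw [monIdeal_union, sup_right_comm] at hi'
  rw [monIdeal_eq_sup_span_singleton_mul φ N j, sup_right_comm]
  exact isSMulRegular_quotient_sup_span_singleton_mul hi hj hi'

theorem isSMulRegular_monIdeal_sup_span (hφ : IsRegularModOthers φ) (c : ι → ℕ) :
    ∀ {U : Finset ι} {i : ι} {N : Set (ι → ℕ)}, i ∉ U → (∀ a ∈ N, a ≤ c) → (∀ a ∈ N, a i = 0) →
      (∀ u ∈ U, ∀ a ∈ N, a u = 0) → IsSMulRegular (A ⧸ (monIdeal φ N ⊔ span (φ '' U))) (φ i) := by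
  induction c using WellFoundedLT.induction with | _ c ih => ?_
  intro U i N hiU hNc hNi hNU
  by_cases hN0 : N ⊆ {0}
  · exact isSMulRegular_monIdeal_sup_span_of_subset_zero hφ hiU hN0
  obtain ⟨a, ha, ha0⟩ := Set.not_subset.1 hN0
  obtain ⟨j, hj⟩ := Function.ne_iff.1 ha0
  have hlt : c - Pi.single j 1 < c := by
    have hcj : 0 < c j := (Nat.pos_of_ne_zero hj).trans_le (hNc a ha j)
    exact Pi.lt_def.2 ⟨tsub_le_self, j, by simpa using Nat.sub_lt hcj one_pos⟩
  have hle : ∀ b ∈ {b ∈ N | b j = 0} ∪ (· + Pi.single j 1) ⁻¹' N, b ≤ c - Pi.single j 1 := by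
    rintro b (hb | hb) l
    · rcases eq_or_ne l j with rfl | hl
      · simp [hb.2]
      · simpa [hl] using hNc b hb.1 l
    · exact le_tsub_of_add_le_right (hNc _ hb) l
  have hzero : ∀ l, (∀ b ∈ N, b l = 0) →
      ∀ b ∈ {b ∈ N | b j = 0} ∪ (· + Pi.single j 1) ⁻¹' N, b l = 0 := by
    rintro l hl b (hb | hb)
    · exact hl b hb.1
    · exact (add_eq_zero.1 (hl _ hb)).1
  have hle₀ b (hb : b ∈ {b ∈ N | b j = 0}) := hle b (Or.inl hb)
  have hzero₀ l hl b (hb : b ∈ {b ∈ N | b j = 0}) := hzero l hl b (Or.inl hb)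
  have hij : i ≠ j := fun hij => hj (hij ▸ hNi a ha)
  have hjU : j ∉ U := fun hjU => hj (hNU j hjU a ha)
  exact isSMulRegular_monIdeal_sup_span_of_filter
    (ih _ hlt (by simp [hij, hiU]) hle₀ (hzero₀ i hNi)
      ((Finset.forall_mem_insert _ _ _).2 ⟨fun b hb => hb.2, fun u hu => hzero₀ u (hNU u hu)⟩))
    (ih _ hlt hjU hle₀ (fun b hb => hb.2) fun u hu => hzero₀ u (hNU u hu))
    (ih _ hlt hiU hle (hzero i hNi) fun u hu => hzero u (hNU u hu))

theorem isSMulRegular_monIdeal (hφ : IsRegularModOthers φ) {N : Set (ι → ℕ)} {i : ι}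
    (hN : ∀ a ∈ N, a i = 0) : IsSMulRegular (A ⧸ monIdeal φ N) (φ i) := by
  refine (isSMulRegular_quotient_iff_mem_of_smul_mem _ _).2 fun y hy => ?_
  obtain ⟨F, hFN, hyF⟩ := exists_finset_of_mem_monIdeal φ hy
  obtain ⟨c, hc⟩ := F.bddAbove
  have hF := isSMulRegular_monIdeal_sup_span hφ c (U := ∅) (Finset.notMem_empty i) hc
    (fun a ha => hN a (hFN ha)) (by simp)
  rw [Finset.coe_empty, Set.image_empty, span_empty, sup_bot_eq] at hF
  exact monIdeal_mono φ hFN (mem_of_isSMulRegular_quotient_of_smul_mem hF hyF)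

theorem mem_monIdeal_preimage_of_mul_mem (hφ : IsRegularModOthers φ) {M : Set (ι → ℕ)}
    (hM : IsUpperSet M) {i : ι} {x : A} (hx : φ i * x ∈ monIdeal φ M) :
    x ∈ monIdeal φ ((· + Pi.single i 1) ⁻¹' M) := by
  rw [monIdeal_eq_sup_span_singleton_mul φ M i, Submodule.mem_sup] at hx
  obtain ⟨g, hg, _, hw, hgh⟩ := hx
  obtain ⟨h, hh, rfl⟩ := mem_span_singleton_mul.1 hw
  have hxh : x - h ∈ monIdeal φ {a ∈ M | a i = 0} :=
    mem_of_isSMulRegular_quotient_of_smul_mem (isSMulRegular_monIdeal hφ fun a ha => ha.2) <| by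
      rwa [smul_eq_mul, mul_sub, ← hgh, add_sub_cancel_right]
  have hsub : {a ∈ M | a i = 0} ⊆ (· + Pi.single i 1) ⁻¹' M := fun a ha => hM le_self_add ha.1
  simpa using add_mem (monIdeal_mono φ hsub hxh) hh

theorem mem_monIdeal_preimage_of_mul_monomial_mem (hφ : IsRegularModOthers φ) (a : ι → ℕ) :
    ∀ {M : Set (ι → ℕ)}, IsUpperSet M → ∀ {x : A}, x * monomial φ a ∈ monIdeal φ M →
      x ∈ monIdeal φ ((· + a) ⁻¹' M) := by
  induction a using Pi.single_induction with
  | zero => simp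
  | add f g hf hg =>
    intro M hM x hx
    rw [monomial_add, ← mul_assoc] at hx
    simpa only [Set.preimage_preimage, add_assoc] using hf (hM.preimage add_left_mono) (hg hM hx)
  | single i m =>
    induction m with
    | zero => simp
    | succ m ih =>
      intro M hM x hx
      rw [monomial_single, pow_succ, ← mul_assoc, mul_comm] at hx
      have hm := ih (hM.preimage add_left_mono) (x := x)
        (by simpa using mem_monIdeal_preimage_of_mul_mem hφ hM hx)
      simpa only [Set.preimage_preimage, add_assoc, ← Pi.single_add] using hm

theorem monIdeal_inf_span_monomial (hφ : IsRegularModOthers φ) {M : Set (ι → ℕ)}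
    (hM : IsUpperSet M) (a : ι → ℕ) :
    monIdeal φ M ⊓ span {monomial φ a} = monIdeal φ (M ∩ Set.Ici a) := by
  refine le_antisymm (fun z hz => ?_) (le_inf (monIdeal_mono φ Set.inter_subset_left)
    ((monIdeal_le_iff φ).2 fun b hb => ?_))
  · obtain ⟨hzM, hza⟩ := Submodule.mem_inf.1 hz
    obtain ⟨c, rfl⟩ := mem_span_singleton'.1 hza
    have hc := monIdeal_preimage_add_le_colon φ M a
      (mem_monIdeal_preimage_of_mul_monomial_mem hφ a hM hzM)
    rwa [Submodule.mem_colon_singleton, smul_eq_mul] at hc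
  · rw [← add_tsub_cancel_of_le (Set.mem_Ici.1 hb.2), monomial_add]
    exact mul_mem_right _ _ (mem_span_singleton_self _)

theorem monIdeal_inf_le_of_finset (hφ : IsRegularModOthers φ) {N₁ N₂ : Set (ι → ℕ)}
    (hN₁ : IsUpperSet N₁) (hN₂ : IsUpperSet N₂) (F : Finset (ι → ℕ)) (hF : ↑F ⊆ N₁) :
    monIdeal φ F ⊓ monIdeal φ N₂ ≤ monIdeal φ (N₁ ∩ N₂) := by
  induction F using Finset.induction_on with
  | empty => simp
  | insert a F _ ih =>
    rw [Finset.coe_insert, Set.insert_subset_iff] at hF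
    intro x hx
    obtain ⟨hx, hx₂⟩ := Submodule.mem_inf.1 hx
    rw [Finset.coe_insert, monIdeal_insert, Submodule.mem_sup] at hx
    obtain ⟨v, hv, g, hg, rfl⟩ := hx
    have hvM : v ∈ monIdeal φ (N₂ ∪ upperClosure (F : Set (ι → ℕ))) := by
      rw [monIdeal_union, monIdeal_upperClosure, ← add_sub_cancel_right v g]
      exact sub_mem (Submodule.mem_sup_left hx₂) (Submodule.mem_sup_right hg)
    have hv' : v ∈ monIdeal φ (N₁ ∩ N₂) ⊔ monIdeal φ F := by
      rw [← monIdeal_upperClosure φ F, ← monIdeal_union]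
      refine monIdeal_mono φ ?_ ((monIdeal_inf_span_monomial hφ
        (hN₂.union (upperClosure _).upper) a).le ⟨hvM, hv⟩)
      rintro b ⟨hb | hb, hab⟩
      · exact Or.inl ⟨hN₁ hab hF.1, hb⟩
      · exact Or.inr hb
    obtain ⟨p, hp, q, hq, rfl⟩ := Submodule.mem_sup.1 hv'
    have hqg : q + g ∈ monIdeal φ N₂ := by
      simpa [add_assoc] using sub_mem hx₂ (monIdeal_mono φ Set.inter_subset_right hp)
    rw [add_assoc]
    exact add_mem hp (ih hF.2 ⟨add_mem hq hg, hqg⟩)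

theorem monIdeal_inter_of_isUpperSet (hφ : IsRegularModOthers φ) {N₁ N₂ : Set (ι → ℕ)}
    (hN₁ : IsUpperSet N₁) (hN₂ : IsUpperSet N₂) :
    monIdeal φ (N₁ ∩ N₂) = monIdeal φ N₁ ⊓ monIdeal φ N₂ := by
  refine le_antisymm (le_inf (monIdeal_mono φ Set.inter_subset_left)
    (monIdeal_mono φ Set.inter_subset_right)) fun x ⟨hx₁, hx₂⟩ => ?_
  obtain ⟨F, hF, hxF⟩ := exists_finset_of_mem_monIdeal φ hx₁
  exact monIdeal_inf_le_of_finset hφ hN₁ hN₂ F hF ⟨hxF, hx₂⟩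

end Regular

theorem RingTheory.Sequence.IsRegular.isRegularModOthers [IsNoetherianRing A] [IsLocalRing A]
    {r : ℕ} {φ : Fin r → A} (hreg : IsRegular A (List.ofFn φ)) : IsRegularModOthers φ := by
  intro U i hi
  have hperm : (List.finRange r).Perm (U.toList ++ [i] ++ (insert i U)ᶜ.toList) := by
    refine (List.perm_ext_iff_of_nodup (List.nodup_finRange r) ?_).2 fun l => ?_
    · simp [List.nodup_append, Finset.nodup_toList]
      grind
    · simp
      tauto
  have hreg' : IsRegular A ((U.toList.map φ ++ [φ i]) ++ (insert i U)ᶜ.toList.map φ) :=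
    IsLocalRing.isRegular_of_perm hreg (by simpa [List.ofFn_eq_map] using hperm.map φ)
  have hspan : Ideal.ofList (U.toList.map φ) = span (φ '' U) := by
    rw [Ideal.ofList]
    congr 1
    ext
    simp
  have hw := hreg'.toIsWeaklyRegular
  rw [isWeaklyRegular_append_iff, isWeaklyRegular_append_iff, isWeaklyRegular_singleton_iff,
    smul_eq_mul, Ideal.mul_top, hspan] at hw
  exact hw.1.2

end MonomialIdeal

theorem monIdeal_inter_general {A : Type*} [CommRing A] [IsNoetherianRing A] [IsLocalRing A]
    {r : ℕ} (φ : Fin r → A)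
    (hreg : RingTheory.Sequence.IsRegular A (List.ofFn φ))
    (N₁ N₂ : Set (Fin r → ℕ)) (h₁ : Saturated N₁) (h₂ : Saturated N₂) :
    monIdeal φ (N₁ ∩ N₂) = monIdeal φ N₁ ⊓ monIdeal φ N₂ :=
  monIdeal_inter_of_isUpperSet hreg.isRegularModOthers h₁.isUpperSet h₂.isUpperSet

/-- Autissier's Lemme 3.3: if `φ₁, …, φ_r` is a regular sequence in a
Noetherian local ring `A` and `N₁`, `N₂` are saturated subsets of `ℕ^r`, then
`𝒤(N₁ ∩ N₂) = 𝒤(N₁) ∩ 𝒤(N₂)`. -/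
theorem monIdeal_inter {A : Type*} [CommRing A] [IsNoetherianRing A] [IsLocalRing A]
    {r : ℕ} (hr : 1 ≤ r) (φ : Fin r → A)
    (hreg : RingTheory.Sequence.IsRegular A (List.ofFn φ))
    (N₁ N₂ : Set (Fin r → ℕ)) (h₁ : Saturated N₁) (h₂ : Saturated N₂) :
    monIdeal φ (N₁ ∩ N₂) = monIdeal φ N₁ ⊓ monIdeal φ N₂ :=
  monIdeal_inter_general φ hreg N₁ N₂ h₁ h₂
end

section
/- Let q ≥ 1, for each i = 1,…,q let M_i be a saturated subset of ℕ^{r_i} with r_i ≥ 1, and let N be a saturated subset of ℕ^q. Then the set M(N) = ⋃_{c ∈ N} c₁M₁ × ⋯ × c_qM_q is a saturated subset of ℕ^r, where r = r₁ + ⋯ + r_q. -/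
/-- `cM`: equal to `ℕ^ι` when `c = 0`, and to the `c`-fold Minkowski sum
`{b₁ + ⋯ + b_c : b₁, …, b_c ∈ M}` when `c > 0`. -/
def minkSum {ι : Type*} (c : ℕ) (M : Set (ι → ℕ)) : Set (ι → ℕ) :=
  if c = 0 then Set.univ
  else {b | ∃ f : Fin c → (ι → ℕ), (∀ i, f i ∈ M) ∧ b = ∑ i, f i}

/-- `M(N) = ⋃_{c ∈ N} c₁M₁ × ⋯ × c_qM_q`, regarded as a subset of
`ℕ^{r₁+⋯+r_q}` by identifying `ℕ^{r₁} × ⋯ × ℕ^{r_q}` with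
`ℕ^{(i : Fin q) × Fin (r i)}`. -/
def MsetOf {q : ℕ} {r : Fin q → ℕ} (M : ∀ i, Set (Fin (r i) → ℕ))
    (N : Set (Fin q → ℕ)) : Set (((i : Fin q) × Fin (r i)) → ℕ) :=
  {a | ∃ c ∈ N, ∀ i : Fin q, (fun j => a ⟨i, j⟩) ∈ minkSum (c i) (M i)}

lemma minkSum_add_mem {ι : Type*} {M : Set (ι → ℕ)} (hM : ∀ a ∈ M, ∀ d, a + d ∈ M)
    {c : ℕ} {b : ι → ℕ} (hb : b ∈ minkSum c M) (d : ι → ℕ) :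
    b + d ∈ minkSum c M := by
  rcases Nat.eq_zero_or_pos c with rfl | hc
  · simp [minkSum]
  · simp only [minkSum, if_neg hc.ne', Set.mem_ofPred_eq] at hb ⊢
    obtain ⟨f, hf, rfl⟩ := hb
    -- absorb the increment `d` into a single summand, which stays in `M`
    let i₀ : Fin c := ⟨0, hc⟩
    refine ⟨f + Pi.single i₀ d, fun i => hM _ (hf i) _, ?_⟩
    simp only [Pi.add_apply, Finset.sum_add_distrib, Finset.sum_pi_single', Finset.mem_univ, if_true]

lemma nsmul_mem_minkSum {ι : Type*} {M : Set (ι → ℕ)} {m : ι → ℕ} (hm : m ∈ M) (c : ℕ) :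
    c • m ∈ minkSum c M := by
  by_cases hc : c = 0
  · simp [minkSum, hc]
  · simp only [minkSum, if_neg hc, Set.mem_ofPred_eq]
    exact ⟨fun _ => m, fun _ => hm, by simp⟩

theorem Saturated.minkSum {ι : Type*} {M : Set (ι → ℕ)} (hM : Saturated M) (c : ℕ) :
    Saturated (minkSum c M) :=
  ⟨⟨c • hM.1.some, nsmul_mem_minkSum hM.1.some_mem c⟩,
    fun _ hb d => minkSum_add_mem hM.2 hb d⟩

theorem MsetOf_saturated_general {q : ℕ} {r : Fin q → ℕ}
    (M : ∀ i, Set (Fin (r i) → ℕ))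
    (hM : ∀ i, Saturated (M i)) (N : Set (Fin q → ℕ)) (hN : Saturated N) :
    Saturated (MsetOf M N) := by
  obtain ⟨c₀, hc₀⟩ := hN.1
  choose b hb using fun i => ((hM i).minkSum (c₀ i)).1
  refine ⟨⟨fun p => b p.1 p.2, c₀, hc₀, hb⟩, ?_⟩
  rintro a ⟨c, hc, ha⟩ d
  exact ⟨c, hc, fun i => ((hM i).minkSum (c i)).2 _ (ha i) _⟩

/-- Definition 2.7: if each `M_i ⊆ ℕ^{r_i}` is saturated (`r_i ≥ 1`) and
`N ⊆ ℕ^q` is saturated (`q ≥ 1`), then `M(N)` is a saturated subset of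
`ℕ^{r₁+⋯+r_q}`. -/
theorem MsetOf_saturated {q : ℕ} (hq : 1 ≤ q) {r : Fin q → ℕ}
    (hr : ∀ i, 1 ≤ r i) (M : ∀ i, Set (Fin (r i) → ℕ))
    (hM : ∀ i, Saturated (M i)) (N : Set (Fin q → ℕ)) (hN : Saturated N) :
    Saturated (MsetOf M N) :=
  MsetOf_saturated_general M hM N hN
end

section
/- Let q ≥ 1, for each i = 1,…,q let M_i be a saturated subset of ℕ^{r_i} (r_i ≥ 1), and let N and N' be saturated subsets of ℕ^q. Then M(N ∩ N') = M(N) ∩ M(N'), where M(N) = ⋃_{c ∈ N} c₁M₁ × ⋯ × c_qM_q ⊆ ℕ^{r₁+⋯+r_q}. -/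
/-!
`M(N) ⊆ M(N')` whenever `N ⊆ N'`, which gives one inclusion. Conversely, if `a ∈ M(N)` is
witnessed by `c` and `a ∈ M(N')` by `c'`, then `c ⊔ c'` witnesses `a ∈ M(N ∩ N')`: each
coordinate `max (c i) (c' i)` is one of `c i`, `c' i`, and `c ⊔ c'` lies in `N` and in `N'`
because both are upward closed.
-/

theorem Saturated.sup_mem_left {ι : Type*} {N : Set (ι → ℕ)} (hN : Saturated N)
    {c : ι → ℕ} (hc : c ∈ N) (d : ι → ℕ) : c ⊔ d ∈ N := by
  have h := hN.2 c hc (c ⊔ d - c)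
  rwa [add_tsub_cancel_of_le le_sup_left] at h

theorem Saturated.sup_mem_right {ι : Type*} {N : Set (ι → ℕ)} (hN : Saturated N)
    {c : ι → ℕ} (hc : c ∈ N) (d : ι → ℕ) : d ⊔ c ∈ N :=
  sup_comm c d ▸ hN.sup_mem_left hc d

theorem mem_minkSum_max {ι : Type*} {M : Set (ι → ℕ)} {m n : ℕ} {x : ι → ℕ}
    (hm : x ∈ minkSum m M) (hn : x ∈ minkSum n M) : x ∈ minkSum (max m n) M := by
  rcases le_total m n with h | h
  · rwa [max_eq_right h]
  · rwa [max_eq_left h]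

theorem MsetOf_mono {q : ℕ} {r : Fin q → ℕ} (M : ∀ i, Set (Fin (r i) → ℕ))
    {N N' : Set (Fin q → ℕ)} (h : N ⊆ N') : MsetOf M N ⊆ MsetOf M N' :=
  fun _ ⟨c, hc, ha⟩ => ⟨c, h hc, ha⟩

theorem MsetOf_inter_general {q : ℕ} {r : Fin q → ℕ}
    (M : ∀ i, Set (Fin (r i) → ℕ))
    (N N' : Set (Fin q → ℕ))
    (hN : Saturated N) (hN' : Saturated N') :
    MsetOf M (N ∩ N') = MsetOf M N ∩ MsetOf M N' := by
  refine Set.Subset.antisymm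
    (Set.subset_inter (MsetOf_mono M Set.inter_subset_left)
      (MsetOf_mono M Set.inter_subset_right)) ?_
  rintro a ⟨⟨c, hc, ha⟩, c', hc', ha'⟩
  exact ⟨c ⊔ c', ⟨hN.sup_mem_left hc c', hN'.sup_mem_right hc' c⟩,
    fun i => mem_minkSum_max (ha i) (ha' i)⟩

/-- Equation (2.13.1): for saturated `M_i ⊆ ℕ^{r_i}` and saturated
`N, N' ⊆ ℕ^q`, one has `M(N ∩ N') = M(N) ∩ M(N')`. -/
theorem MsetOf_inter {q : ℕ} (hq : 1 ≤ q) {r : Fin q → ℕ}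
    (hr : ∀ i, 1 ≤ r i) (M : ∀ i, Set (Fin (r i) → ℕ))
    (hM : ∀ i, Saturated (M i)) (N N' : Set (Fin q → ℕ))
    (hN : Saturated N) (hN' : Saturated N') :
    MsetOf M (N ∩ N') = MsetOf M N ∩ MsetOf M N' :=
  MsetOf_inter_general M N N' hN hN'
end

section
/- Let A be a commutative ring and let I₁,…,I_q (q ≥ 1) be ideals of A that have the Autissier property. Then 𝒥(N(t,x)) ∩ 𝒥(N(u,y)) ⊆ 𝒥(N(λt + (1−λ)u, λx + (1−λ)y)) for all t, u ∈ ℝ_{≥0}^q ∖ {0}, all x, y ∈ ℝ_{≥0}, and all λ ∈ [0,1]. -/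
/-- `𝒥(N) = Σ_{b ∈ N} I₁^{b₁} ⋯ I_q^{b_q}`. -/
def Jideal {A : Type*} [CommRing A] {q : ℕ} (I : Fin q → Ideal A)
    (N : Set (Fin q → ℕ)) : Ideal A :=
  ⨆ b ∈ N, ∏ i, I i ^ b i

/-- Definition 2.12: the ideals `I₁, …, I_q` have the *Autissier property*
if `𝒥(N ∩ N') = 𝒥(N) ∩ 𝒥(N')` for all saturated subsets `N, N'` of `ℕ^q`. -/
def AutissierProperty {A : Type*} [CommRing A] {q : ℕ}
    (I : Fin q → Ideal A) : Prop :=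
  ∀ N N' : Set (Fin q → ℕ), Saturated N → Saturated N' →
    Jideal I (N ∩ N') = Jideal I N ⊓ Jideal I N'

/-- `N(t,x) = {b ∈ ℕ^q : t₁b₁ + ⋯ + t_qb_q ≥ x}`. -/
def Nset {q : ℕ} (t : Fin q → ℝ) (x : ℝ) : Set (Fin q → ℕ) :=
  {b | x ≤ ∑ i, t i * (b i : ℝ)}

lemma Jideal_mono {A : Type*} [CommRing A] {q : ℕ} (I : Fin q → Ideal A)
    {N N' : Set (Fin q → ℕ)} (h : N ⊆ N') : Jideal I N ≤ Jideal I N' :=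
  biSup_mono h

section Nset

variable {q : ℕ} {t u : Fin q → ℝ} {x y : ℝ}

lemma Nset_nonempty (ht : ∀ i, 0 ≤ t i) (ht0 : t ≠ 0) : (Nset t x).Nonempty := by
  obtain ⟨i, hi⟩ := Function.ne_iff.mp ht0
  have hti : 0 < t i := (ht i).lt_of_ne' hi
  refine ⟨fun _ => ⌈x / t i⌉₊, ?_⟩
  calc x ≤ t i * ⌈x / t i⌉₊ := (div_le_iff₀' hti).mp (Nat.le_ceil _)
    _ ≤ ∑ j, t j * ⌈x / t i⌉₊ :=
      Finset.single_le_sum (f := fun j => t j * (⌈x / t i⌉₊ : ℝ))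
        (fun j _ => mul_nonneg (ht j) (Nat.cast_nonneg _)) (Finset.mem_univ i)

lemma add_mem_Nset (ht : ∀ i, 0 ≤ t i) {a : Fin q → ℕ} (ha : a ∈ Nset t x)
    (c : Fin q → ℕ) : a + c ∈ Nset t x := by
  refine (show x ≤ _ from ha).trans (Finset.sum_le_sum fun j _ => ?_)
  gcongr
  · exact ht j
  · simp

lemma saturated_Nset (ht : ∀ i, 0 ≤ t i) (ht0 : t ≠ 0) : Saturated (Nset t x) :=
  ⟨Nset_nonempty ht ht0, fun _ ha c => add_mem_Nset ht ha c⟩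

lemma Nset_inter_subset_Nset_convexComb {lam : ℝ} (hlam : lam ∈ Set.Icc (0 : ℝ) 1) :
    Nset t x ∩ Nset u y ⊆ Nset (lam • t + (1 - lam) • u) (lam * x + (1 - lam) * y) := by
  rintro b ⟨hbt, hbu⟩
  have h1lam : 0 ≤ 1 - lam := sub_nonneg.mpr hlam.2
  calc lam * x + (1 - lam) * y
      ≤ lam * ∑ i, t i * b i + (1 - lam) * ∑ i, u i * b i := by
        gcongr
        · exact hlam.1
        · exact hbt
        · exact hbu
    _ = ∑ i, (lam • t + (1 - lam) • u) i * b i := by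
        simp only [Finset.mul_sum, ← Finset.sum_add_distrib, Pi.add_apply, Pi.smul_apply,
          smul_eq_mul, add_mul, mul_assoc]

end Nset

theorem Jideal_Nset_inter_le_general {A : Type*} [CommRing A] {q : ℕ}
    (I : Fin q → Ideal A) (hI : AutissierProperty I)
    (t u : Fin q → ℝ) (ht : ∀ i, 0 ≤ t i) (ht0 : t ≠ 0)
    (hu : ∀ i, 0 ≤ u i) (hu0 : u ≠ 0)
    (x y : ℝ)
    (lam : ℝ) (hlam : lam ∈ Set.Icc (0:ℝ) 1) :
    Jideal I (Nset t x) ⊓ Jideal I (Nset u y) ≤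
      Jideal I (Nset (lam • t + (1 - lam) • u) (lam * x + (1 - lam) * y)) := by
  rw [← hI _ _ (saturated_Nset (x := x) ht ht0) (saturated_Nset (x := y) hu hu0)]
  exact Jideal_mono I (Nset_inter_subset_Nset_convexComb hlam)

/-- Proposition 2.14: if `I₁, …, I_q` have the Autissier property, then
`𝒥(N(t,x)) ∩ 𝒥(N(u,y)) ⊆ 𝒥(N(λt + (1−λ)u, λx + (1−λ)y))` for all
`t, u ∈ ℝ_{≥0}^q ∖ {0}`, all `x, y ∈ ℝ_{≥0}`, and all `λ ∈ [0,1]`. -/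
theorem Jideal_Nset_inter_le {A : Type*} [CommRing A] {q : ℕ} (hq : 1 ≤ q)
    (I : Fin q → Ideal A) (hI : AutissierProperty I)
    (t u : Fin q → ℝ) (ht : ∀ i, 0 ≤ t i) (ht0 : t ≠ 0)
    (hu : ∀ i, 0 ≤ u i) (hu0 : u ≠ 0)
    (x y : ℝ) (hx : 0 ≤ x) (hy : 0 ≤ y)
    (lam : ℝ) (hlam : lam ∈ Set.Icc (0:ℝ) 1) :
    Jideal I (Nset t x) ⊓ Jideal I (Nset u y) ≤
      Jideal I (Nset (lam • t + (1 - lam) • u) (lam * x + (1 - lam) * y)) :=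
  Jideal_Nset_inter_le_general I hI t u ht ht0 hu hu0 x y lam hlam
end

section
/- Let 0 < r ≤ n be integers, and for all N ∈ ℕ let f_{n,r}(N) = Σ_{m=1}^N Σ_{ℓ=0}^{m−1} C(N−ℓ+n−r, n−r)·C(ℓ+r−1, r−1). Then f_{n,r}(N) = (n−r+1)·N^{n+1}/(n+1)! + O(N^n) as N → ∞; that is, there is a constant c (depending only on n and r) such that |f_{n,r}(N) − (n−r+1)·N^{n+1}/(n+1)!| ≤ c·N^n for all N ≥ 1. -/
/-!
Exchanging the two sums weights the `ℓ`-th term by `N - ℓ`, and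
`(N - ℓ) * C(N - ℓ + a, a) = (a + 1) * C(N - ℓ + a, a + 1)` with `a = n - r`. What remains is the
convolution of two diagonals of Pascal's triangle, i.e. the coefficient of a product of powers of
`1 / (1 - X)`, so `f_{n,r}(N) = (n - r + 1) * C(N + n, n + 1)`. Finally
`(n + 1)! * C(N + n, n + 1) = N (N + 1) ⋯ (N + n)` lies between `N ^ (n + 1)` and `(N + n) ^ (n + 1)`,
and these differ by `O(N ^ n)`.
-/

/-- `f_{n,r}(N) = Σ_{m=1}^N Σ_{ℓ=0}^{m−1} C(N−ℓ+n−r, n−r) · C(ℓ+r−1, r−1)`. -/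
def fnr (n r N : ℕ) : ℕ :=
  ∑ m ∈ Finset.Icc 1 N, ∑ ℓ ∈ Finset.range m,
    (N - ℓ + n - r).choose (n - r) * (ℓ + r - 1).choose (r - 1)

open Finset PowerSeries

theorem Finset.Nat.sum_antidiagonal_choose_add_mul_choose_add (p q n : ℕ) :
    ∑ ij ∈ antidiagonal n, (p + ij.1).choose p * (q + ij.2).choose q =
      (p + q + 1 + n).choose (p + q + 1) := by
  have h := congrArg (coeff n) (pow_add (PowerSeries.mk 1 : ℤ⟦X⟧) (p + 1) (q + 1))
  rw [← add_assoc, mk_one_pow_eq_mk_choose_add, mk_one_pow_eq_mk_choose_add,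
    mk_one_pow_eq_mk_choose_add, coeff_mul] at h
  simp only [coeff_mk] at h
  rw [add_right_comm p q 1]
  exact_mod_cast h.symm

theorem Finset.sum_Icc_one_sum_range {M : Type*} [AddCommMonoid M] (g : ℕ → M) (N : ℕ) :
    ∑ m ∈ Icc 1 N, ∑ ℓ ∈ range m, g ℓ = ∑ ℓ ∈ range N, (N - ℓ) • g ℓ := by
  induction N with
  | zero => simp
  | succ N ih =>
    have hsucc : ∀ ℓ ∈ range N, (N + 1 - ℓ) • g ℓ = (N - ℓ) • g ℓ + g ℓ := by
      intro ℓ hℓ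
      rw [Nat.sub_add_comm (mem_range.mp hℓ).le, succ_nsmul]
    rw [sum_Icc_succ_top (by omega), ih, sum_range_succ (fun ℓ => (N + 1 - ℓ) • g ℓ),
      sum_congr rfl hsucc, sum_add_distrib, sum_range_succ]
    simp [add_assoc]

theorem fnr_eq_mul_choose (n r N : ℕ) (hr : 0 < r) (hrn : r ≤ n) :
    fnr n r N = (n - r + 1) * (N + n).choose (n + 1) := by
  obtain ⟨a, b, rfl, rfl⟩ : ∃ a b, n = a + b + 1 ∧ r = b + 1 := ⟨n - r, r - 1, by omega, by omega⟩
  obtain _ | M := N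
  · simp [fnr]
  have hterm : ∀ ℓ ∈ range (M + 1),
      (M + 1 - ℓ) • ((M + 1 - ℓ + (a + b + 1) - (b + 1)).choose (a + b + 1 - (b + 1)) *
        (ℓ + (b + 1) - 1).choose (b + 1 - 1)) =
      (a + 1) * ((b + ℓ).choose b * (a + 1 + (M - ℓ)).choose (a + 1)) := by
    intro ℓ hℓ
    have hℓ := mem_range.mp hℓ
    have hc := Nat.choose_succ_right_eq (a + 1 + (M - ℓ)) a
    rw [show a + 1 + (M - ℓ) - a = M + 1 - ℓ by omega] at hc
    rw [show M + 1 - ℓ + (a + b + 1) - (b + 1) = a + 1 + (M - ℓ) by omega,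
      show a + b + 1 - (b + 1) = a by omega, show ℓ + (b + 1) - 1 = b + ℓ by omega,
      Nat.add_sub_cancel, smul_eq_mul]
    calc _ = (b + ℓ).choose b * ((a + 1 + (M - ℓ)).choose a * (M + 1 - ℓ)) := by ring
      _ = _ := by rw [← hc]; ring
  rw [fnr, sum_Icc_one_sum_range, sum_congr rfl hterm, ← mul_sum,
    ← Nat.sum_antidiagonal_eq_sum_range_succ_mk
      (fun ij => (b + ij.1).choose b * (a + 1 + ij.2).choose (a + 1)),
    Nat.sum_antidiagonal_choose_add_mul_choose_add]
  congr 2 <;> omega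

theorem Nat.cast_ascFactorial_sub_pow_le {N : ℕ} (hN : 1 ≤ N) (k : ℕ) :
    (N.ascFactorial (k + 1) : ℝ) - N ^ (k + 1) ≤ k * (k + 1) ^ (k + 1) * N ^ k := by
  have hasc : (N.ascFactorial (k + 1) : ℝ) ≤ (N + k : ℝ) ^ (k + 1) := by
    obtain ⟨M, rfl⟩ : ∃ M, N = M + 1 := ⟨N - 1, by omega⟩
    exact_mod_cast (Nat.ascFactorial_le_pow_add M (k + 1)).trans_eq (by ring)
  have hN' : (1 : ℝ) ≤ N := by exact_mod_cast hN
  have hk : (0 : ℝ) ≤ k := k.cast_nonneg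
  have hpow_sub_pow : (N + k : ℝ) ^ (k + 1) - N ^ (k + 1) ≤ k * (k + 1) * (N + k : ℝ) ^ k := by
    have h := abs_pow_sub_pow_le (N + k : ℝ) N (k + 1)
    rw [add_sub_cancel_left, abs_of_nonneg hk, abs_of_nonneg (by positivity : (0 : ℝ) ≤ N),
      abs_of_nonneg (by positivity : (0 : ℝ) ≤ N + k), max_eq_left (by linarith),
      Nat.add_sub_cancel] at h
    push_cast at h
    exact (le_abs_self _).trans h
  calc (N.ascFactorial (k + 1) : ℝ) - N ^ (k + 1)
      ≤ k * (k + 1) * (N + k : ℝ) ^ k := by linarith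
    _ ≤ k * (k + 1) * ((k + 1) * N) ^ k := by gcongr; nlinarith
    _ = k * (k + 1) ^ (k + 1) * N ^ k := by rw [mul_pow]; ring

/-- Lemma 9.2.5: for `0 < r ≤ n`,
`f_{n,r}(N) = (n−r+1) · N^{n+1}/(n+1)! + O(N^n)` as `N → ∞`; i.e., there is a
constant `c` (depending only on `n` and `r`) with
`|f_{n,r}(N) − (n−r+1) N^{n+1}/(n+1)!| ≤ c·N^n` for all `N ≥ 1`. -/
theorem fnr_asymptotic (n r : ℕ) (hr : 0 < r) (hrn : r ≤ n) :
    ∃ c : ℝ, ∀ N : ℕ, 1 ≤ N →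
      |(fnr n r N : ℝ) - ((n : ℝ) - r + 1) * (N : ℝ) ^ (n + 1) / (n + 1).factorial|
        ≤ c * (N : ℝ) ^ n := by
  refine ⟨((n : ℝ) - r + 1) * (n * (n + 1) ^ (n + 1)), fun N hN => ?_⟩
  have hweight : (0 : ℝ) ≤ (n : ℝ) - r + 1 := by
    have : (r : ℝ) ≤ n := by exact_mod_cast hrn
    linarith
  have hfnr : (fnr n r N : ℝ) = ((n : ℝ) - r + 1) * N.ascFactorial (n + 1) / (n + 1).factorial := by
    rw [fnr_eq_mul_choose n r N hr hrn, Nat.ascFactorial_eq_factorial_mul_choose',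
      show N + (n + 1) - 1 = N + n by omega]
    push_cast [hrn]
    field_simp
  have hlower : (N : ℝ) ^ (n + 1) ≤ N.ascFactorial (n + 1) := by
    exact_mod_cast Nat.pow_succ_le_ascFactorial N (n + 1)
  have hfact : (1 : ℝ) ≤ (n + 1).factorial := by exact_mod_cast (n + 1).factorial_pos
  have hgap : 0 ≤ ((n : ℝ) - r + 1) * (N.ascFactorial (n + 1) - (N : ℝ) ^ (n + 1)) :=
    mul_nonneg hweight (sub_nonneg.mpr hlower)
  rw [hfnr, ← sub_div, ← mul_sub, abs_of_nonneg (div_nonneg hgap (by positivity))]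
  calc ((n : ℝ) - r + 1) * (N.ascFactorial (n + 1) - (N : ℝ) ^ (n + 1)) / (n + 1).factorial
      ≤ ((n : ℝ) - r + 1) * (N.ascFactorial (n + 1) - (N : ℝ) ^ (n + 1)) :=
        div_le_self hgap hfact
    _ ≤ ((n : ℝ) - r + 1) * (n * (n + 1) ^ (n + 1) * N ^ n) :=
        mul_le_mul_of_nonneg_left (Nat.cast_ascFactorial_sub_pow_le hN n) hweight
    _ = _ := by ring
end

section
/- Let n > r ≥ 1 be integers and for all N ∈ ℕ let f_{n,r}(N) = Σ_{m=1}^N Σ_{ℓ=0}^{m−1} C(N−ℓ+n−r, n−r)·C(ℓ+r−1, r−1). Then for every integer N ≥ 1, f_{n,r}(N) − f_{n,r}(N−1) = f_{n−1,r}(N) + C(N−1+n, n). -/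
open Finset PowerSeries

theorem Nat.sum_antidiagonal_add_choose_mul_add_choose (a b M : ℕ) :
    ∑ p ∈ antidiagonal M, (a + p.1).choose a * (b + p.2).choose b
      = (a + b + 1 + M).choose (a + b + 1) := by
  have h := congrArg (fun u : (ℤ⟦X⟧)ˣ => coeff M u.val) (invOneSubPow_add ℤ (a + 1) (b + 1))
  simp only [Units.val_mul, coeff_mul, ← add_assoc, invOneSubPow_val_succ_eq_mk_add_choose,
    coeff_mk] at h
  rw [add_right_comm a 1 b] at h
  exact_mod_cast h.symm

theorem Nat.sum_range_sub_add_choose_mul_add_choose (a b M : ℕ) :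
    ∑ ℓ ∈ range (M + 1), (M - ℓ + a).choose a * (ℓ + b).choose b
      = (M + a + b + 1).choose (a + b + 1) := by
  rw [← Nat.sum_antidiagonal_eq_sum_range_succ (fun i j => (j + a).choose a * (i + b).choose b)]
  simpa only [add_comm, add_left_comm, add_assoc, mul_comm]
    using Nat.sum_antidiagonal_add_choose_mul_add_choose b a M

def fnrReparam (a b N : ℕ) : ℕ :=
  ∑ m ∈ Icc 1 N, ∑ ℓ ∈ range m, (N - ℓ + a).choose a * (ℓ + b).choose b

theorem fnr_eq_fnrReparam (a b N : ℕ) : fnr (a + (b + 1)) (b + 1) N = fnrReparam a b N := by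
  unfold fnr fnrReparam
  refine sum_congr rfl fun m _ => sum_congr rfl fun ℓ _ => ?_
  congr 2 <;> omega

theorem fnrReparam_succ_succ (a b M : ℕ) :
    fnrReparam (a + 1) b (M + 1)
      = fnrReparam (a + 1) b M + fnrReparam a b (M + 1) + (M + a + b + 2).choose (a + b + 2) := by
  have pascal : ∀ m ∈ Icc 1 (M + 1),
      ∑ ℓ ∈ range m, (M + 1 - ℓ + (a + 1)).choose (a + 1) * (ℓ + b).choose b
        = ∑ ℓ ∈ range m, (M - ℓ + (a + 1)).choose (a + 1) * (ℓ + b).choose b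
          + ∑ ℓ ∈ range m, (M + 1 - ℓ + a).choose a * (ℓ + b).choose b := by
    intro m hm
    rw [← sum_add_distrib]
    refine sum_congr rfl fun ℓ hℓ => ?_
    have hℓM : ℓ ≤ M := by grind
    rw [show M + 1 - ℓ + (a + 1) = M - ℓ + a + 1 + 1 by omega, Nat.choose_succ_succ,
      show M + 1 - ℓ + a = M - ℓ + a + 1 by omega, ← add_assoc, add_mul, add_comm]
  calc fnrReparam (a + 1) b (M + 1)
      = ∑ m ∈ Icc 1 (M + 1), ∑ ℓ ∈ range m, (M - ℓ + (a + 1)).choose (a + 1) * (ℓ + b).choose b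
          + fnrReparam a b (M + 1) := by
        rw [fnrReparam, sum_congr rfl pascal, sum_add_distrib, fnrReparam]
    _ = fnrReparam (a + 1) b M
          + ∑ ℓ ∈ range (M + 1), (M - ℓ + (a + 1)).choose (a + 1) * (ℓ + b).choose b
          + fnrReparam a b (M + 1) := by
        rw [sum_Icc_succ_top (by omega)]
        rfl
    _ = _ := by
        rw [Nat.sum_range_sub_add_choose_mul_add_choose]
        ring_nf

/-- The recurrence in the proof of Lemma 9.2.5: for `n > r ≥ 1` and `N ≥ 1`,
`f_{n,r}(N) − f_{n,r}(N−1) = f_{n−1,r}(N) + C(N−1+n, n)`. -/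
theorem fnr_recurrence (n r : ℕ) (hr : 1 ≤ r) (hrn : r < n) (N : ℕ) (hN : 1 ≤ N) :
    (fnr n r N : ℤ) - (fnr n r (N - 1) : ℤ)
      = (fnr (n - 1) r N : ℤ) + ((N - 1 + n).choose n : ℤ) := by
  obtain ⟨b, rfl⟩ : ∃ b, r = b + 1 := ⟨r - 1, by omega⟩
  obtain ⟨a, rfl⟩ : ∃ a, n = a + 1 + (b + 1) := ⟨n - b - 2, by omega⟩
  obtain ⟨M, rfl⟩ : ∃ M, N = M + 1 := ⟨N - 1, by omega⟩
  have hpred : a + 1 + (b + 1) - 1 = a + (b + 1) := by omega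
  rw [Nat.add_sub_cancel, hpred, fnr_eq_fnrReparam, fnr_eq_fnrReparam, fnr_eq_fnrReparam,
    fnrReparam_succ_succ]
  push_cast
  ring_nf
end

section
/- Let 0 < r ≤ n be integers. For N, m ∈ ℕ, let a(N,m) denote the number of tuples (j₀, j₁, …, j_n) ∈ ℕ^{n+1} with j₀ + j₁ + ⋯ + j_n = N and j₁ + ⋯ + j_r ≥ m. Then lim_{N → ∞} (Σ_{m=1}^N a(N,m)) / (N·C(N+n, n)) = r/(n+1). (This computes β(𝒪(1), Y) = r/(n+1) for the codimension-r linear subspace Y : x₁ = ⋯ = x_r = 0 of ℙ^n, since a(N,m) = h⁰(ℙ^n, 𝒪(N) ⊗ ℐ_Y^m).) -/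
/-!
The identity behind the limit is exact for every `N`. Summing `a(N,m)` over `1 ≤ m ≤ N` counts
each tuple `j` once for every `m ≤ j₁ + ⋯ + j_r`, so the sum equals `∑_j (j₁ + ⋯ + j_r)`. The
coordinate permutations act on the tuples of total `N`, so every coordinate has the same total,
namely `N · C(N+n, n) / (n+1)`; hence `(n+1) · ∑_m a(N,m) = r · N · C(N+n, n)`.
-/

open Filter

/-- `a(N,m)`: the number of tuples `(j₀, …, j_n) ∈ ℕ^{n+1}` with
`j₀ + ⋯ + j_n = N` and `j₁ + ⋯ + j_r ≥ m`; this is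
`h⁰(ℙ^n, 𝒪(N) ⊗ ℐ_Y^m)` for the linear subspace `Y : x₁ = ⋯ = x_r = 0`. -/
noncomputable def aCount (n r N m : ℕ) : ℕ :=
  Nat.card {j : Fin (n + 1) → ℕ // (∑ i, j i) = N ∧
    m ≤ ∑ i ∈ Finset.univ.filter
      (fun i : Fin (n + 1) => 1 ≤ (i : ℕ) ∧ (i : ℕ) ≤ r), j i}

open Finset

namespace Finset

variable {ι : Type*} [DecidableEq ι] [Fintype ι]

theorem mem_piAntidiag_univ {μ : Type*} [AddCommMonoid μ] [HasAntidiagonal μ] [DecidableEq μ]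
    {n : μ} {f : ι → μ} : f ∈ piAntidiag univ n ↔ ∑ i, f i = n := by
  simp

theorem card_piAntidiag_univ_nat (N : ℕ) :
    #(piAntidiag (univ : Finset ι) N) = (Fintype.card ι + N - 1).choose N := by
  rw [card_eq_of_equiv_fintype ((Equiv.subtypeEquivRight fun _ => mem_piAntidiag_univ).trans
    (Sym.equivNatSumOfFintype ι N).symm), Sym.card_sym_eq_choose]

theorem sum_apply_piAntidiag_univ_nat (N : ℕ) (i i' : ι) :
    ∑ f ∈ piAntidiag univ N, f i = ∑ f ∈ piAntidiag univ N, f i' := by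
  refine sum_equiv ((Equiv.swap i i').arrowCongr (Equiv.refl ℕ)) (fun f => ?_) (fun f _ => ?_)
  · simp only [mem_piAntidiag_univ, Equiv.arrowCongr_apply, Equiv.symm_swap,
      Equiv.coe_refl, Function.comp_apply, id_eq, Equiv.sum_comp]
  · simp

theorem card_mul_sum_apply_piAntidiag_univ_nat (N : ℕ) (i : ι) :
    Fintype.card ι * ∑ f ∈ piAntidiag univ N, f i = N * #(piAntidiag (univ : Finset ι) N) := by
  calc Fintype.card ι * ∑ f ∈ piAntidiag univ N, f i
      = ∑ i' : ι, ∑ f ∈ piAntidiag univ N, f i' := by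
        rw [← smul_eq_mul, ← card_univ, ← sum_const]
        exact sum_congr rfl fun i' _ => sum_apply_piAntidiag_univ_nat N i i'
    _ = ∑ f ∈ piAntidiag univ N, N := by
        rw [sum_comm]
        exact sum_congr rfl fun f hf => mem_piAntidiag_univ.mp hf
    _ = N * #(piAntidiag (univ : Finset ι) N) := by rw [sum_const, smul_eq_mul, mul_comm]

theorem card_mul_sum_sum_piAntidiag_univ_nat (s : Finset ι) (N : ℕ) :
    Fintype.card ι * ∑ f ∈ piAntidiag univ N, ∑ i ∈ s, f i
      = #s * (N * #(piAntidiag (univ : Finset ι) N)) := by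
  rw [sum_comm, mul_sum, ← smul_eq_mul, ← sum_const]
  exact sum_congr rfl fun i _ => card_mul_sum_apply_piAntidiag_univ_nat N i

theorem sum_Icc_card_filter_le {α : Type*} (s : Finset α) (f : α → ℕ) {N : ℕ}
    (hf : ∀ x ∈ s, f x ≤ N) :
    ∑ m ∈ Icc 1 N, #{x ∈ s | m ≤ f x} = ∑ x ∈ s, f x := by
  simp only [card_filter]
  rw [sum_comm]
  refine sum_congr rfl fun x hx => ?_
  have hIcc : {m ∈ Icc 1 N | m ≤ f x} = Icc 1 (f x) := by
    ext m
    simp only [mem_filter, mem_Icc]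
    have := hf x hx
    omega
  rw [sum_boole, Nat.cast_id, hIcc, Nat.card_Icc, Nat.add_sub_cancel]

end Finset

theorem card_piAntidiag_univ_fin_succ (n N : ℕ) :
    #(piAntidiag (univ : Finset (Fin (n + 1))) N) = (N + n).choose n := by
  rw [card_piAntidiag_univ_nat, Fintype.card_fin, add_right_comm, Nat.add_sub_cancel, add_comm,
    Nat.choose_symm_add]

theorem card_filter_one_le_val_le {n r : ℕ} (hrn : r ≤ n) :
    #{i : Fin (n + 1) | 1 ≤ (i : ℕ) ∧ (i : ℕ) ≤ r} = r := by
  have hmap : map Fin.valEmbedding {i : Fin (n + 1) | 1 ≤ (i : ℕ) ∧ (i : ℕ) ≤ r} = Icc 1 r := by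
    ext m
    simp only [Finset.mem_map, mem_filter, mem_univ, true_and, Fin.valEmbedding_apply, mem_Icc]
    exact ⟨fun ⟨i, hi, him⟩ => him ▸ hi, fun hm => ⟨⟨m, by omega⟩, hm, rfl⟩⟩
  rw [← card_map, hmap, Nat.card_Icc, Nat.add_sub_cancel]

theorem aCount_eq_card_filter (n r N m : ℕ) :
    aCount n r N m = #{f ∈ piAntidiag univ N |
      m ≤ ∑ i ∈ univ.filter fun i : Fin (n + 1) => 1 ≤ (i : ℕ) ∧ (i : ℕ) ≤ r, f i} := by
  rw [aCount, ← Nat.card_eq_finsetCard]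
  exact Nat.card_congr (Equiv.subtypeEquivRight fun f => by simp)

theorem succ_mul_sum_aCount {n r : ℕ} (hrn : r ≤ n) (N : ℕ) :
    (n + 1) * ∑ m ∈ Icc 1 N, aCount n r N m = r * (N * (N + n).choose n) := by
  set Y := univ.filter fun i : Fin (n + 1) => 1 ≤ (i : ℕ) ∧ (i : ℕ) ≤ r
  have hY : ∀ f ∈ piAntidiag univ N, ∑ i ∈ Y, f i ≤ N := fun f hf =>
    (sum_le_univ_sum_of_nonneg fun _ => Nat.zero_le _).trans_eq (mem_piAntidiag_univ.mp hf)
  have h := card_mul_sum_sum_piAntidiag_univ_nat Y N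
  rw [Fintype.card_fin, card_filter_one_le_val_le hrn, card_piAntidiag_univ_fin_succ] at h
  simp_rw [aCount_eq_card_filter]
  rwa [sum_Icc_card_filter_le _ _ hY]

theorem beta_linear_subspace_general (n r : ℕ) (hrn : r ≤ n) :
    Tendsto
      (fun N : ℕ =>
        (∑ m ∈ Finset.Icc 1 N, (aCount n r N m : ℝ)) /
          ((N : ℝ) * ((N + n).choose n : ℝ)))
      atTop (nhds ((r : ℝ) / ((n : ℝ) + 1))) := by
  refine tendsto_const_nhds.congr' ?_
  filter_upwards [eventually_gt_atTop 0] with N hN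
  have hchoose : 0 < (N + n).choose n := Nat.choose_pos (Nat.le_add_left n N)
  have key : ((n : ℝ) + 1) * ∑ m ∈ Icc 1 N, (aCount n r N m : ℝ)
      = r * (N * (N + n).choose n) := by
    exact_mod_cast succ_mul_sum_aCount hrn N
  rw [div_eq_div_iff (by positivity) (by positivity)]
  linarith

/-- Proposition 9.2: for `0 < r ≤ n`,
`lim_{N→∞} (Σ_{m=1}^N a(N,m)) / (N · C(N+n, n)) = r/(n+1)`; that is,
`β(𝒪(1), Y) = r/(n+1)` for a codimension-`r` linear subspace `Y ⊆ ℙ^n`. -/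
theorem beta_linear_subspace (n r : ℕ) (hr : 0 < r) (hrn : r ≤ n) :
    Tendsto
      (fun N : ℕ =>
        (∑ m ∈ Finset.Icc 1 N, (aCount n r N m : ℝ)) /
          ((N : ℝ) * ((N + n).choose n : ℝ)))
      atTop (nhds ((r : ℝ) / ((n : ℝ) + 1))) :=
  beta_linear_subspace_general n r hrn
end
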